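/- Let X be a locally compact Hausdorff topological space, let a₁,…,a_N : X → ℝ be continuous functions such that (i) they separate points of X, and (ii) the map x ↦ Σ_j |a_j(x)| tends to infinity at infinity (i.e. {x : Σ|a_j(x)| ≤ R} is compact for every R). Then for every continuous compactly supported function f : X → ℝ there exists a continuous compactly supported function g : ℝ^N → ℝ such that f(x) = g(a₁(x),…,a_N(x)) for all x ∈ X. -/

import Mathlib

/-!
The map `A x = (a₁ x, …, a_N x)` is continuous, injective (the `aⱼ` separate points) and proper
(a bounded set of `ℝ^N` pulls back into a compact sublevel set of `∑ⱼ |aⱼ|`), hence a closed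
embedding. Extend `f` from the closed set `A(X)` to `ℝ^N` by Tietze, then multiply by a compactly
supported bump equal to `1` on the compact set `A(tsupport f)`.
-/

open Set Topology Metric

lemma isProperMap_of_isCompact_preimage_closedBall {X E : Type*} [TopologicalSpace X]
    [MetricSpace E] {f : X → E} (hf : Continuous f) (c : E)
    (hball : ∀ r, IsCompact (f ⁻¹' closedBall c r)) : IsProperMap f := by
  refine isProperMap_iff_isCompact_preimage.2 ⟨hf, fun K hK => ?_⟩
  obtain ⟨r, hr⟩ := hK.isBounded.subset_closedBall c
  exact (hball r).of_isClosed_subset (hK.isClosed.preimage hf) (preimage_mono hr)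

lemma preimage_closedBall_zero_subset_sum_abs_le {ι X : Type*} [Fintype ι] (a : ι → X → ℝ)
    (r : ℝ) :
    (fun x j => a j x) ⁻¹' closedBall 0 r ⊆ {x | ∑ j, |a j x| ≤ Fintype.card ι * r} := by
  intro x hx
  rw [mem_preimage, mem_closedBall_zero_iff] at hx
  calc ∑ j, |a j x| ≤ ∑ _j : ι, r :=
        Finset.sum_le_sum fun j _ => (norm_le_pi_norm (fun j => a j x) j).trans hx
    _ = Fintype.card ι * r := by simp

lemma Topology.IsClosedEmbedding.exists_hasCompactSupport_extension {X Y : Type*}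
    [TopologicalSpace X] [TopologicalSpace Y] [T4Space Y] [LocallyCompactSpace Y] {e : X → Y}
    (he : IsClosedEmbedding e) {f : X → ℝ} (hf : Continuous f) (hfc : HasCompactSupport f) :
    ∃ g : Y → ℝ, Continuous g ∧ HasCompactSupport g ∧ ∀ x, g (e x) = f x := by
  obtain ⟨G, hGe⟩ := ContinuousMap.exists_extension' he ⟨f, hf⟩
  obtain ⟨φ, hφ_one, -, hφc, -⟩ :=
    exists_continuous_one_zero_of_isCompact (hfc.image he.continuous) isClosed_empty
      (disjoint_empty _)
  refine ⟨fun y => φ y * G y, by fun_prop, hφc.mul_right, fun x => ?_⟩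
  have hGx : G (e x) = f x := congrFun hGe x
  by_cases hx : x ∈ tsupport f
  · simp [hφ_one (mem_image_of_mem e hx), hGx]
  · simp [image_eq_zero_of_notMem_tsupport hx, hGx]

theorem factor_through_separating_system_general
    (X : Type*) [TopologicalSpace X]
    (N : ℕ) (a : Fin N → X → ℝ) (ha : ∀ j, Continuous (a j))
    (hsep : ∀ x x' : X, x ≠ x' → ∃ j, a j x ≠ a j x')
    (hinf : ∀ R : ℝ, IsCompact {x : X | ∑ j, |a j x| ≤ R}) :
    ∀ f : X → ℝ, Continuous f → HasCompactSupport f →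
      ∃ g : (Fin N → ℝ) → ℝ, Continuous g ∧ HasCompactSupport g ∧
        ∀ x : X, f x = g (fun j => a j x) := by
  intro f hf hfc
  set A : X → (Fin N → ℝ) := fun x j => a j x
  have hA : Continuous A := continuous_pi ha
  have hA_inj : Function.Injective A := fun x x' hxx' => by
    by_contra hne
    obtain ⟨j, hj⟩ := hsep x x' hne
    exact hj (congrFun hxx' j)
  have hA_proper : IsProperMap A :=
    isProperMap_of_isCompact_preimage_closedBall hA 0 fun r =>
      (hinf _).of_isClosed_subset (isClosed_closedBall.preimage hA)
        (preimage_closedBall_zero_subset_sum_abs_le a r)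
  obtain ⟨g, hg, hgc, hgA⟩ :=
    (IsClosedEmbedding.of_continuous_injective_isClosedMap hA hA_inj
      hA_proper.isClosedMap).exists_hasCompactSupport_extension hf hfc
  exact ⟨g, hg, hgc, fun x => (hgA x).symm⟩

/-- Topological lemma: if finitely many continuous functions separate points and tend to
infinity at infinity, every continuous compactly supported function on `X` factors through
them via a continuous compactly supported function on `ℝ^N`. -/
theorem factor_through_separating_system
    (X : Type*) [TopologicalSpace X] [T2Space X] [LocallyCompactSpace X]
    (N : ℕ) (a : Fin N → X → ℝ) (ha : ∀ j, Continuous (a j))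
    (hsep : ∀ x x' : X, x ≠ x' → ∃ j, a j x ≠ a j x')
    (hinf : ∀ R : ℝ, IsCompact {x : X | ∑ j, |a j x| ≤ R}) :
    ∀ f : X → ℝ, Continuous f → HasCompactSupport f →
      ∃ g : (Fin N → ℝ) → ℝ, Continuous g ∧ HasCompactSupport g ∧
        ∀ x : X, f x = g (fun j => a j x) :=
  factor_through_separating_system_general X N a ha hsep hinf
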